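/- arXiv:2005.11807 — 3 statements merged into one kernel-verified Lean document; each statement's English description precedes it below -/
import Mathlib

section
/- Let t > 0, 0 ≤ c̃ < c ≤ 1, s = √(1-c²), s̃ = √(1-c̃²), and F(q) = (A(q) + √(A(q)² - 4B(q)²))/2 with A(q) = q² + t² - 2qtcc̃, B(q) = -tqss̃. Then F is differentiable at q* = tc̃/c and F'(q*) = 0. -/
/-!
Near `q*` the discriminant `A² - 4B²` is positive and `F` is the larger root of
`λ² - A λ + B² = 0`. Differentiating this identity implicitly gives
`F' = (F A' - (B²)') / √(A² - 4B²)`, so `q*` is stationary exactly when `F A' = (B²)'`.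
At `q*` one has `√(A² - 4B²) = t²(1 - c̃²/c²)`, hence `F(q*) = t²(1 - c̃²)`, and both sides
equal `2 t³ c̃ (1 - c²)(1 - c̃²) / c`.
-/

open Real

theorem HasDerivAt.larger_quadratic_root {a b : ℝ → ℝ} {a' b' x : ℝ}
    (ha : HasDerivAt a a' x) (hb : HasDerivAt b b' x) (hd : 0 < a x ^ 2 - 4 * b x) :
    HasDerivAt (fun y => (a y + √(a y ^ 2 - 4 * b y)) / 2)
      (((a x + √(a x ^ 2 - 4 * b x)) / 2 * a' - b') / √(a x ^ 2 - 4 * b x)) x := by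
  have hdisc : HasDerivAt (fun y => a y ^ 2 - 4 * b y) (2 * a x * a' - 4 * b') x :=
    ((ha.pow 2).sub (hb.const_mul 4)).congr_deriv (by simp)
  refine ((ha.add (hdisc.sqrt hd.ne')).div_const 2).congr_deriv ?_
  have hsqrt : 0 < √(a x ^ 2 - 4 * b x) := sqrt_pos.mpr hd
  field_simp
  ring

theorem stmt_4 (t c ctil : ℝ) (ht : 0 < t) (hctil : 0 ≤ ctil) (hlt : ctil < c) (hc : c ≤ 1)
    (s stil : ℝ) (hs : s = Real.sqrt (1 - c ^ 2)) (hstil : stil = Real.sqrt (1 - ctil ^ 2))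
    (A B F : ℝ → ℝ)
    (hA : ∀ q, A q = q ^ 2 + t ^ 2 - 2 * q * t * c * ctil)
    (hB : ∀ q, B q = -(t * q * s * stil))
    (hF : ∀ q, F q = (A q + Real.sqrt ((A q) ^ 2 - 4 * (B q) ^ 2)) / 2)
    (qstar : ℝ) (hq : qstar = t * ctil / c) :
    DifferentiableAt ℝ F qstar ∧ deriv F qstar = 0 := by
  have hc0 : 0 < c := hctil.trans_lt hlt
  have hB2 : ∀ q, B q ^ 2 = t ^ 2 * (1 - c ^ 2) * (1 - ctil ^ 2) * q ^ 2 := fun q => by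
    rw [hB, neg_sq, mul_pow, mul_pow, mul_pow, hs, hstil, sq_sqrt (by nlinarith),
      sq_sqrt (by nlinarith)]
    ring
  have hA' : HasDerivAt A (2 * qstar - 2 * t * c * ctil) qstar := by
    rw [funext hA]
    refine (((hasDerivAt_pow 2 qstar).add_const (t ^ 2)).sub
      (((((hasDerivAt_id' qstar).const_mul 2).mul_const t).mul_const c).mul_const
        ctil)).congr_deriv ?_
    norm_num
  have hB2' : HasDerivAt (fun q => B q ^ 2)
      (t ^ 2 * (1 - c ^ 2) * (1 - ctil ^ 2) * (2 * qstar)) qstar := by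
    rw [funext hB2]
    refine ((hasDerivAt_pow 2 qstar).const_mul _).congr_deriv ?_
    ring
  have hdisc : A qstar ^ 2 - 4 * B qstar ^ 2 = (t ^ 2 * (1 - ctil ^ 2 / c ^ 2)) ^ 2 := by
    rw [hA, hB2, hq]
    field_simp
    ring
  have hpos : 0 < t ^ 2 * (1 - ctil ^ 2 / c ^ 2) := by
    have : ctil ^ 2 / c ^ 2 < 1 := by rw [div_lt_one (by positivity)]; nlinarith
    nlinarith [pow_pos ht 2]
  have hF' := hA'.larger_quadratic_root hB2' (by rw [hdisc]; positivity)
  rw [← funext hF, hdisc, sqrt_sq hpos.le] at hF'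
  refine ⟨hF'.differentiableAt, hF'.deriv.trans ?_⟩
  rw [hA, hq]
  field_simp
  ring
end

section
/- Let t > 0, 0 ≤ c ≤ 1, 0 ≤ c̃ ≤ 1, not both zero, s = √(1-c²), s̃ = √(1-c̃²), and let D(q) = [[t,0],[0,0]] - q[[cc̃, cs̃],[sc̃, ss̃]]. Then q* = t·min{c,c̃}/max{c,c̃} is a global minimizer of q ↦ ‖D(q)‖_op² over ℝ, and the minimum value is t²·max{s², s̃²}. -/
/-!
Write `u = (c, s)` and `v = (c̃, s̃)`, both unit vectors, so that `D(q) = t e₁e₁ᵀ - q u vᵀ`.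
The rank-one part kills `v⊥ = (s̃, -c̃)`, which `D(q)` therefore maps to `t s̃ e₁`; hence
`‖D(q)‖ ≥ t s̃` for every `q`, and `‖D(q)‖ ≥ t s` follows in the same way from `D(q)ᵀ`.
Transposing swaps the roles of `u` and `v`, so we may assume `c̃ ≤ c`. Then `q* c = t c̃`, the rows
of `D(q*)` are `t s̃ (v⊥)ᵀ` and `-q* s vᵀ`, which are orthogonal, and `|q* s| ≤ t s̃`; so
`‖D(q*)‖ ≤ t s̃`.
-/

noncomputable def opNorm (M : Matrix (Fin 2) (Fin 2) ℝ) : ℝ :=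
  ‖Matrix.toEuclideanCLM (𝕜 := ℝ) M‖

open Matrix

lemma opNorm_transpose (M : Matrix (Fin 2) (Fin 2) ℝ) : opNorm Mᵀ = opNorm M := by
  rw [opNorm, ← conjTranspose_eq_transpose_of_trivial, ← star_eq_conjTranspose, map_star,
    ContinuousLinearMap.star_eq_adjoint, LinearIsometryEquiv.norm_map]
  rfl

lemma norm_toEuclideanCLM_apply_sq (M : Matrix (Fin 2) (Fin 2) ℝ) (x : EuclideanSpace ℝ (Fin 2)) :
    ‖toEuclideanCLM (𝕜 := ℝ) M x‖ ^ 2 =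
      (M 0 0 * x 0 + M 0 1 * x 1) ^ 2 + (M 1 0 * x 0 + M 1 1 * x 1) ^ 2 := by
  rw [← WithLp.toLp_ofLp 2 x, toEuclideanCLM_toLp, EuclideanSpace.norm_sq_eq]
  simp [mulVec, dotProduct, Fin.sum_univ_two]

lemma opNorm_sq_le_of_forall {M : Matrix (Fin 2) (Fin 2) ℝ} {K : ℝ}
    (h : ∀ a b : ℝ,
      (M 0 0 * a + M 0 1 * b) ^ 2 + (M 1 0 * a + M 1 1 * b) ^ 2 ≤ K * (a ^ 2 + b ^ 2)) :
    opNorm M ^ 2 ≤ K := by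
  have hK : 0 ≤ K := by nlinarith [h 1 0]
  have hle : opNorm M ≤ √K := by
    refine ContinuousLinearMap.opNorm_le_bound _ (Real.sqrt_nonneg K) fun x => ?_
    rw [← Real.sqrt_sq (norm_nonneg (toEuclideanCLM (𝕜 := ℝ) M x)), ← Real.sqrt_sq (norm_nonneg x),
      ← Real.sqrt_mul hK, norm_toEuclideanCLM_apply_sq, EuclideanSpace.norm_sq_eq]
    simpa [Fin.sum_univ_two] using Real.sqrt_le_sqrt (h (x 0) (x 1))
  exact (pow_le_pow_left₀ (norm_nonneg _ : 0 ≤ opNorm M) hle 2).trans_eq (Real.sq_sqrt hK)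

lemma sq_le_opNorm_sq (M : Matrix (Fin 2) (Fin 2) ℝ) {a b : ℝ} (hab : a ^ 2 + b ^ 2 = 1) :
    (M 0 0 * a + M 0 1 * b) ^ 2 + (M 1 0 * a + M 1 1 * b) ^ 2 ≤ opNorm M ^ 2 := by
  have hx : ‖!₂[a, b]‖ ^ 2 = 1 := by
    simpa [EuclideanSpace.norm_sq_eq, Fin.sum_univ_two] using hab
  have hle := pow_le_pow_left₀ (norm_nonneg _) ((toEuclideanCLM (𝕜 := ℝ) M).le_opNorm !₂[a, b]) 2
  rwa [mul_pow, hx, mul_one, norm_toEuclideanCLM_apply_sq] at hle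

def diagSubRankOne (t c ctil s stil q : ℝ) : Matrix (Fin 2) (Fin 2) ℝ :=
  !![t, 0; 0, 0] - q • !![c * ctil, c * stil; s * ctil, s * stil]

section diagSubRankOne

variable {t c ctil s stil : ℝ}

lemma diagSubRankOne_transpose (q : ℝ) :
    (diagSubRankOne t c ctil s stil q)ᵀ = diagSubRankOne t ctil c stil s q := by
  ext i j
  fin_cases i <;> fin_cases j <;> simp [diagSubRankOne, mul_comm]

lemma opNorm_diagSubRankOne_comm (q : ℝ) :
    opNorm (diagSubRankOne t c ctil s stil q) = opNorm (diagSubRankOne t ctil c stil s q) := by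
  rw [← opNorm_transpose, diagSubRankOne_transpose]

lemma sq_mul_sq_le_opNorm_diagSubRankOne_sq (hv : ctil ^ 2 + stil ^ 2 = 1) (q : ℝ) :
    t ^ 2 * stil ^ 2 ≤ opNorm (diagSubRankOne t c ctil s stil q) ^ 2 :=
  calc t ^ 2 * stil ^ 2
      = ((t - q * (c * ctil)) * stil + -(q * (c * stil)) * -ctil) ^ 2 +
          (-(q * (s * ctil)) * stil + -(q * (s * stil)) * -ctil) ^ 2 := by ring
    _ ≤ _ := by
      simpa [diagSubRankOne] using
        sq_le_opNorm_sq (diagSubRankOne t c ctil s stil q) (a := stil) (b := -ctil) (by linarith)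

lemma opNorm_diagSubRankOne_sq_le_of {q : ℝ} (hv : ctil ^ 2 + stil ^ 2 = 1)
    (hqc : q * c = t * ctil) (hqs : (q * s) ^ 2 ≤ (t * stil) ^ 2) :
    opNorm (diagSubRankOne t c ctil s stil q) ^ 2 ≤ t ^ 2 * stil ^ 2 := by
  refine opNorm_sq_le_of_forall fun a b => ?_
  have row₁ :
      (t - q * (c * ctil)) * a + -(q * (c * stil)) * b = t * stil * (stil * a - ctil * b) := by
    linear_combination -(ctil * a + stil * b) * hqc - t * a * hv
  have rotation : (stil * a - ctil * b) ^ 2 + (ctil * a + stil * b) ^ 2 = a ^ 2 + b ^ 2 := by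
    linear_combination (a ^ 2 + b ^ 2) * hv
  simp only [diagSubRankOne, of_sub_of, of_apply, smul_of, smul_cons, smul_empty, cons_val',
    cons_val_zero, cons_val_one, cons_sub_cons, zero_sub, empty_val', cons_val_fin_one,
    smul_eq_mul, empty_sub_empty]
  calc _ = (t * stil) ^ 2 * (stil * a - ctil * b) ^ 2 + (q * s) ^ 2 * (ctil * a + stil * b) ^ 2 :=
        by rw [row₁]; ring
    _ ≤ (t * stil) ^ 2 * (stil * a - ctil * b) ^ 2 + (t * stil) ^ 2 * (ctil * a + stil * b) ^ 2 :=
        by gcongr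
    _ = t ^ 2 * stil ^ 2 * (a ^ 2 + b ^ 2) := by rw [← rotation]; ring

lemma opNorm_diagSubRankOne_sq_le (hu : c ^ 2 + s ^ 2 = 1) (hv : ctil ^ 2 + stil ^ 2 = 1)
    (hcc : ctil ^ 2 ≤ c ^ 2) :
    opNorm (diagSubRankOne t c ctil s stil (t * ctil / c)) ^ 2 ≤ t ^ 2 * stil ^ 2 := by
  rcases eq_or_ne c 0 with rfl | hc
  -- then `ctil = 0`, and `t * ctil / 0 = 0` makes `q = 0` a valid choice
  · have : ctil = 0 := by nlinarith
    exact opNorm_diagSubRankOne_sq_le_of hv (by simp [this]) (by simp [this]; positivity)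
  refine opNorm_diagSubRankOne_sq_le_of hv (by field_simp)
    (le_of_mul_le_mul_right ?_ (by positivity : 0 < c ^ 2))
  calc (t * ctil / c * s) ^ 2 * c ^ 2 = t ^ 2 * (ctil ^ 2 * s ^ 2) := by field_simp
    _ ≤ t ^ 2 * (c ^ 2 * stil ^ 2) := by gcongr t ^ 2 * ?_; nlinarith
    _ = (t * stil) ^ 2 * c ^ 2 := by ring

theorem opNorm_diagSubRankOne_sq_isMin (hu : c ^ 2 + s ^ 2 = 1) (hv : ctil ^ 2 + stil ^ 2 = 1)
    (hcc : ctil ^ 2 ≤ c ^ 2) :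
    (∀ q, opNorm (diagSubRankOne t c ctil s stil (t * ctil / c)) ^ 2 ≤
      opNorm (diagSubRankOne t c ctil s stil q) ^ 2) ∧
    opNorm (diagSubRankOne t c ctil s stil (t * ctil / c)) ^ 2 = t ^ 2 * stil ^ 2 := by
  have hmin := le_antisymm (opNorm_diagSubRankOne_sq_le (t := t) hu hv hcc)
    (sq_mul_sq_le_opNorm_diagSubRankOne_sq hv _)
  exact ⟨fun q => hmin ▸ sq_mul_sq_le_opNorm_diagSubRankOne_sq hv q, hmin⟩

end diagSubRankOne

theorem stmt_6_general (t c ctil : ℝ)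
    (hc0 : 0 ≤ c) (hc1 : c ≤ 1) (hctil0 : 0 ≤ ctil) (hctil1 : ctil ≤ 1)
    (s stil : ℝ) (hs : s = Real.sqrt (1 - c ^ 2)) (hstil : stil = Real.sqrt (1 - ctil ^ 2))
    (D : ℝ → Matrix (Fin 2) (Fin 2) ℝ)
    (hD : ∀ q, D q = !![t, 0; 0, 0] - q • !![c * ctil, c * stil; s * ctil, s * stil])
    (qstar : ℝ) (hq : qstar = t * min c ctil / max c ctil) :
    (∀ q, (opNorm (D qstar)) ^ 2 ≤ (opNorm (D q)) ^ 2) ∧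
    (opNorm (D qstar)) ^ 2 = t ^ 2 * max (s ^ 2) (stil ^ 2) := by
  have hu : c ^ 2 + s ^ 2 = 1 := by rw [hs, Real.sq_sqrt (by nlinarith)]; ring
  have hv : ctil ^ 2 + stil ^ 2 = 1 := by rw [hstil, Real.sq_sqrt (by nlinarith)]; ring
  obtain rfl : D = diagSubRankOne t c ctil s stil := funext hD
  subst hq
  rcases le_total ctil c with h | h
  · rw [min_eq_right h, max_eq_left h, max_eq_right (by nlinarith)]
    exact opNorm_diagSubRankOne_sq_isMin hu hv (by nlinarith)
  · rw [min_eq_left h, max_eq_right h, max_eq_left (by nlinarith)]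
    simp only [opNorm_diagSubRankOne_comm (c := c)]
    exact opNorm_diagSubRankOne_sq_isMin hv hu (by nlinarith)

theorem stmt_6 (t c ctil : ℝ) (ht : 0 < t)
    (hc0 : 0 ≤ c) (hc1 : c ≤ 1) (hctil0 : 0 ≤ ctil) (hctil1 : ctil ≤ 1)
    (hnz : ¬(c = 0 ∧ ctil = 0))
    (s stil : ℝ) (hs : s = Real.sqrt (1 - c ^ 2)) (hstil : stil = Real.sqrt (1 - ctil ^ 2))
    (D : ℝ → Matrix (Fin 2) (Fin 2) ℝ)
    (hD : ∀ q, D q = !![t, 0; 0, 0] - q • !![c * ctil, c * stil; s * ctil, s * stil])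
    (qstar : ℝ) (hq : qstar = t * min c ctil / max c ctil) :
    (∀ q, (opNorm (D qstar)) ^ 2 ≤ (opNorm (D q)) ^ 2) ∧
    (opNorm (D qstar)) ^ 2 = t ^ 2 * max (s ^ 2) (stil ^ 2) :=
  stmt_6_general t c ctil hc0 hc1 hctil0 hctil1 s stil hs hstil D hD qstar hq
end

section
/- Let t > 0, 0 ≤ c̃ ≤ c ≤ 1, s = √(1-c²), s̃ = √(1-c̃²). The squared operator norm of D(t) = [[t,0],[0,0]] - t[[cc̃, cs̃],[sc̃, ss̃]] equals t²(1 - cc̃ + (c - c̃)) = t²(1 - c̃)(1 + c). -/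
open Matrix

theorem ContinuousLinearMap.opNorm_sq_eq_of_attained {𝕜 E F : Type*} [NontriviallyNormedField 𝕜]
    [NormedAddCommGroup E] [NormedSpace 𝕜 E] [SeminormedAddCommGroup F] [NormedSpace 𝕜 F]
    (f : E →L[𝕜] F) {a : ℝ} (hle : ∀ x, ‖f x‖ ^ 2 ≤ a * ‖x‖ ^ 2) {x₀ : E} (hx₀ : x₀ ≠ 0)
    (heq : ‖f x₀‖ ^ 2 = a * ‖x₀‖ ^ 2) : ‖f‖ ^ 2 = a := by
  have hx₀ : 0 < ‖x₀‖ := norm_pos_iff.mpr hx₀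
  have ha : 0 ≤ a := nonneg_of_mul_nonneg_left (heq ▸ sq_nonneg _) (pow_pos hx₀ 2)
  have hbound : ∀ x, ‖f x‖ ≤ √a * ‖x‖ := fun x ↦ by
    rw [← Real.sqrt_sq (norm_nonneg x), ← Real.sqrt_mul ha, ← Real.sqrt_sq (norm_nonneg (f x))]
    exact Real.sqrt_le_sqrt (hle x)
  have hattained : ‖f x₀‖ = √a * ‖x₀‖ := by
    rw [← Real.sqrt_sq (norm_nonneg (f x₀)), heq, Real.sqrt_mul ha, Real.sqrt_sq (norm_nonneg x₀)]
  have hf : ‖f‖ = √a :=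
    le_antisymm (f.opNorm_le_bound (Real.sqrt_nonneg a) hbound)
      (le_of_mul_le_mul_right (hattained ▸ f.le_opNorm x₀) hx₀)
  rw [hf, Real.sq_sqrt ha]

theorem Matrix.norm_toEuclideanCLM_apply_sq_fin_two (M : Matrix (Fin 2) (Fin 2) ℝ)
    (v : EuclideanSpace ℝ (Fin 2)) :
    ‖toEuclideanCLM (𝕜 := ℝ) M v‖ ^ 2
      = (M 0 0 * v 0 + M 0 1 * v 1) ^ 2 + (M 1 0 * v 0 + M 1 1 * v 1) ^ 2 := by
  simp [EuclideanSpace.real_norm_sq_eq, Fin.sum_univ_two, ofLp_toEuclideanCLM, mulVec, dotProduct]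

theorem opNorm_sq_eq_of_attained (p q r u a x₀ y₀ : ℝ)
    (hle : ∀ x y, (p * x + q * y) ^ 2 + (r * x + u * y) ^ 2 ≤ a * (x ^ 2 + y ^ 2))
    (hne : x₀ ≠ 0 ∨ y₀ ≠ 0)
    (heq : (p * x₀ + q * y₀) ^ 2 + (r * x₀ + u * y₀) ^ 2 = a * (x₀ ^ 2 + y₀ ^ 2)) :
    opNorm !![p, q; r, u] ^ 2 = a := by
  have hnorm_sq : ∀ v : EuclideanSpace ℝ (Fin 2), ‖v‖ ^ 2 = v 0 ^ 2 + v 1 ^ 2 := fun v ↦ by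
    simp [EuclideanSpace.real_norm_sq_eq, Fin.sum_univ_two]
  refine (toEuclideanCLM (𝕜 := ℝ) !![p, q; r, u]).opNorm_sq_eq_of_attained
    (x₀ := !₂[x₀, y₀]) (fun v ↦ ?_) ?_ ?_
  · rw [norm_toEuclideanCLM_apply_sq_fin_two, hnorm_sq]
    exact hle (v 0) (v 1)
  · simpa [or_iff_not_imp_left] using hne
  · rw [norm_toEuclideanCLM_apply_sq_fin_two, hnorm_sq]
    exact heq

theorem one_add_mul_defect_eq (t c ctil s stil x y : ℝ) (hs : s ^ 2 = 1 - c ^ 2)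
    (hstil : stil ^ 2 = 1 - ctil ^ 2) :
    (1 + ctil) * (t ^ 2 * (1 - ctil) * (1 + c) * (x ^ 2 + y ^ 2)
      - (((t - t * (c * ctil)) * x + -(t * (c * stil)) * y) ^ 2
        + (-(t * (s * ctil)) * x + -(t * (s * stil)) * y) ^ 2))
    = t ^ 2 * (c - ctil) * ((1 + ctil) * x + stil * y) ^ 2 := by
  linear_combination (-(1 + ctil) * t ^ 2 * (ctil * x + stil * y) ^ 2) * hs
    - t ^ 2 * y ^ 2 * (1 + c) * hstil

theorem stmt_9_general (t c ctil : ℝ)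
    (hctil0 : 0 ≤ ctil) (hle : ctil ≤ c) (hc1 : c ≤ 1)
    (s stil : ℝ) (hs : s = Real.sqrt (1 - c ^ 2)) (hstil : stil = Real.sqrt (1 - ctil ^ 2)) :
    (opNorm (!![t, 0; 0, 0] - t • !![c * ctil, c * stil; s * ctil, s * stil])) ^ 2
      = t ^ 2 * (1 - c * ctil + (c - ctil)) ∧
    t ^ 2 * (1 - c * ctil + (c - ctil)) = t ^ 2 * (1 - ctil) * (1 + c) := by
  have hs2 : s ^ 2 = 1 - c ^ 2 := by rw [hs, Real.sq_sqrt (by nlinarith)]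
  have hstil2 : stil ^ 2 = 1 - ctil ^ 2 := by rw [hstil, Real.sq_sqrt (by nlinarith)]
  have hpos : 0 < 1 + ctil := by linarith
  have hD : !![t, 0; 0, 0] - t • !![c * ctil, c * stil; s * ctil, s * stil]
      = !![t - t * (c * ctil), -(t * (c * stil)); -(t * (s * ctil)), -(t * (s * stil))] := by
    simp [smul_of]
  have hfactor : t ^ 2 * (1 - c * ctil + (c - ctil)) = t ^ 2 * (1 - ctil) * (1 + c) := by ring
  refine ⟨?_, hfactor⟩
  rw [hD, hfactor]
  refine opNorm_sq_eq_of_attained _ _ _ _ _ stil (-(1 + ctil)) (fun x y ↦ ?_)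
    (.inr (neg_ne_zero.mpr hpos.ne')) ?_
  · have hdefect := one_add_mul_defect_eq t c ctil s stil x y hs2 hstil2
    have hsq_nonneg : 0 ≤ t ^ 2 * (c - ctil) * ((1 + ctil) * x + stil * y) ^ 2 := by
      have := sub_nonneg.mpr hle
      positivity
    exact sub_nonneg.mp (nonneg_of_mul_nonneg_right (hdefect ▸ hsq_nonneg) hpos)
  · have hdefect := one_add_mul_defect_eq t c ctil s stil stil (-(1 + ctil)) hs2 hstil2
    rw [show (1 + ctil) * stil + stil * -(1 + ctil) = 0 by ring, zero_pow two_ne_zero,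
      mul_zero] at hdefect
    exact (sub_eq_zero.mp ((mul_eq_zero.mp hdefect).resolve_left hpos.ne')).symm

theorem stmt_9 (t c ctil : ℝ) (ht : 0 < t)
    (hctil0 : 0 ≤ ctil) (hle : ctil ≤ c) (hc1 : c ≤ 1)
    (s stil : ℝ) (hs : s = Real.sqrt (1 - c ^ 2)) (hstil : stil = Real.sqrt (1 - ctil ^ 2)) :
    (opNorm (!![t, 0; 0, 0] - t • !![c * ctil, c * stil; s * ctil, s * stil])) ^ 2
      = t ^ 2 * (1 - c * ctil + (c - ctil)) ∧
    t ^ 2 * (1 - c * ctil + (c - ctil)) = t ^ 2 * (1 - ctil) * (1 + c) :=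
  stmt_9_general t c ctil hctil0 hle hc1 s stil hs hstil
end
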